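/- Let H, H₂ and Q be Hilbert spaces, L : H → H₂ and G : Q → H bounded linear operators with L ∘ G = 0, and define the continuous bilinear forms a(u, v) = (Lu, Lv) on H × H and b(v, q) = (v, Gq) on H × Q. Suppose g ∈ H and (w, ϱ) ∈ H × Q solves a(w, v) + b(v, ϱ) = a(g, v) for all v ∈ H, and b(w, q) = 0 for all q ∈ Q. Then L w = L g. -/
import Mathlib


open scoped RealInnerProductSpace

/-- The Hodge operator preserves the curl: with `a u v = ⟪L u, L v⟫`, `b v q = ⟪v, G q⟫`
and `L ∘ G = 0`, the solution `(w, ϱ)` of the mixed problem satisfies `L w = L g`. -/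
theorem stmt13 {H H₂ Q : Type*}
    [NormedAddCommGroup H] [InnerProductSpace ℝ H]
    [NormedAddCommGroup H₂] [InnerProductSpace ℝ H₂]
    [NormedAddCommGroup Q] [InnerProductSpace ℝ Q]
    (L : H →L[ℝ] H₂) (G : Q →L[ℝ] H)
    (hLG : ∀ q : Q, L (G q) = 0)
    (g w : H) (ϱ : Q)
    (heq1 : ∀ v : H, ⟪L w, L v⟫ + ⟪v, G ϱ⟫ = ⟪L g, L v⟫)
    (heq2 : ∀ q : Q, ⟪w, G q⟫ = 0) :
    L w = L g := by
  have hGϱ : G ϱ = 0 := by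
    have h := heq1 (G ϱ)
    rw [hLG ϱ] at h
    simp only [inner_zero_right] at h
    have : ⟪G ϱ, G ϱ⟫ = 0 := by linarith
    exact inner_self_eq_zero.mp this
  have hall : ∀ v : H, ⟪L w - L g, L v⟫ = 0 := by
    intro v
    have h := heq1 v
    rw [hGϱ, inner_zero_right] at h
    rw [inner_sub_left]
    linarith
  have h := hall (w - g)
  rw [map_sub] at h
  have := inner_self_eq_zero.mp h
  exact sub_eq_zero.mp this
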